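/- arXiv:2412.05229 — 4 statements merged into one kernel-verified Lean document; each statement's English description precedes it below -/
import Mathlib

section
/- Let E be a set of slopes on a torus (primitive vectors in ℤ² up to sign) such that the maximum of Δ(c1,c2) over pairs c1, c2 ∈ E equals 4. Then there is exactly one unordered pair {c1,c2} ⊆ E with Δ(c1,c2) = 4. -/
lemma not_both_even {a b : ℤ} (h : IsCoprime a b) (ha : 2 ∣ a) (hb : 2 ∣ b) : False := by
  obtain ⟨x, y, hxy⟩ := h
  obtain ⟨s, rfl⟩ := ha
  obtain ⟨t, rfl⟩ := hb
  have h2 : (2:ℤ) ∣ 1 := ⟨x * s + y * t, by linear_combination -hxy⟩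
  norm_num at h2

lemma zmod2_core : ∀ a b c d : ZMod 2, a * d - b * c = 0 →
    ¬(a = 0 ∧ b = 0) → ¬(c = 0 ∧ d = 0) → (a + c = 0 ∧ b + d = 0) := by decide

lemma key (v1 v2 w1 w2 u1 u2 : ℤ) (hv : IsCoprime v1 v2) (hw : IsCoprime w1 w2)
    (hu : IsCoprime u1 u2)
    (hD : v1 * w2 - v2 * w1 = 4 ∨ v1 * w2 - v2 * w1 = -4)
    (hA : -4 ≤ u1 * w2 - u2 * w1 ∧ u1 * w2 - u2 * w1 ≤ 4)
    (hY : -4 ≤ v1 * u2 - v2 * u1 ∧ v1 * u2 - v2 * u1 ≤ 4) :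
    ((v1 * u2 - v2 * u1 = 4 ∨ v1 * u2 - v2 * u1 = -4) → u1 * w2 - u2 * w1 = 0) ∧
    ((u1 * w2 - u2 * w1 = 4 ∨ u1 * w2 - u2 * w1 = -4) → v1 * u2 - v2 * u1 = 0) := by
  obtain ⟨r1, r2, hr⟩ := hv
  obtain ⟨p1, p2, hp⟩ := hw
  set D := v1 * w2 - v2 * w1 with hD_def
  set A := u1 * w2 - u2 * w1 with hA_def
  set Y := v1 * u2 - v2 * u1 with hY_def
  set c := r1 * w1 + r2 * w2 with hc_def
  set M := r1 * u1 + r2 * u2 with hM_def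
  -- Cramer identities
  have hC1 : D * u1 = A * v1 + Y * w1 := by rw [hD_def, hA_def, hY_def]; ring
  have hC2 : D * u2 = A * v2 + Y * w2 := by rw [hD_def, hA_def, hY_def]; ring
  -- congruence: A + Y*c = D*M  (uses Bezout hr)
  have hcong : A + Y * c = D * M := by
    rw [hD_def, hA_def, hY_def, hc_def, hM_def]
    linear_combination (-(u1 * w2 - u2 * w1)) * hr
  have h4D : (4:ℤ) ∣ D := by rcases hD with h | h <;> omega
  -- c is odd
  have hsc : (p1 * v1 + p2 * v2) * c + (p2 * r1 - p1 * r2) * D = 1 := by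
    rw [hc_def, hD_def]
    linear_combination (r1 * v1 + r2 * v2) * hp + hr
  have hcodd : Odd c := by
    rcases Int.even_or_odd c with ⟨m, hm⟩ | h
    · exfalso
      obtain ⟨e, he⟩ := h4D
      have h2 : (2:ℤ) ∣ 1 :=
        ⟨(p1 * v1 + p2 * v2) * m + 2 * ((p2 * r1 - p1 * r2) * e), by
          rw [← hsc, hm, he]; ring⟩
      norm_num at h2
    · exact h
  -- parity: v + w ≡ 0 mod 2
  have hdz : ((v1 : ZMod 2)) * (w2 : ZMod 2) - (v2 : ZMod 2) * (w1 : ZMod 2) = 0 := by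
    have : (((v1 * w2 - v2 * w1 : ℤ)) : ZMod 2) = 0 := by
      rcases hD with h | h <;> rw [← hD_def, h] <;> decide
    push_cast at this
    linear_combination this
  have hvnz : ¬((v1 : ZMod 2) = 0 ∧ (v2 : ZMod 2) = 0) := by
    rintro ⟨h1, h2⟩
    rw [ZMod.intCast_zmod_eq_zero_iff_dvd] at h1 h2
    exact not_both_even ⟨r1, r2, hr⟩ (by exact_mod_cast h1) (by exact_mod_cast h2)
  have hwnz : ¬((w1 : ZMod 2) = 0 ∧ (w2 : ZMod 2) = 0) := by
    rintro ⟨h1, h2⟩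
    rw [ZMod.intCast_zmod_eq_zero_iff_dvd] at h1 h2
    exact not_both_even ⟨p1, p2, hp⟩ (by exact_mod_cast h1) (by exact_mod_cast h2)
  have hz := zmod2_core (v1 : ZMod 2) (v2 : ZMod 2) (w1 : ZMod 2) (w2 : ZMod 2) hdz hvnz hwnz
  have hpar1 : (2:ℤ) ∣ v1 + w1 := by
    have h0 : (((v1 + w1 : ℤ)) : ZMod 2) = 0 := by push_cast; exact hz.1
    rwa [ZMod.intCast_zmod_eq_zero_iff_dvd] at h0
  have hpar2 : (2:ℤ) ∣ v2 + w2 := by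
    have h0 : (((v2 + w2 : ℤ)) : ZMod 2) = 0 := by push_cast; exact hz.2
    rwa [ZMod.intCast_zmod_eq_zero_iff_dvd] at h0
  obtain ⟨k1, hk1⟩ := hpar1
  obtain ⟨k2, hk2⟩ := hpar2
  -- statement (iii)
  have hiii : (Y = 4 ∨ Y = -4) → A = 0 := by
    intro hY4
    have h4Y : (4:ℤ) ∣ Y := by rcases hY4 with h | h <;> omega
    have h4A : (4:ℤ) ∣ A := by
      have heq : A = D * M - Y * c := by linear_combination hcong
      rw [heq]
      exact dvd_sub (h4D.mul_right M) (h4Y.mul_right c)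
    obtain ⟨α, hα⟩ := h4A
    rcases Int.even_or_odd α with ⟨n, hn⟩ | ⟨n, hn⟩
    · omega
    · exfalso
      -- u1, u2 both even: contradiction with hu
      obtain ⟨d, hd, hdval⟩ : ∃ d : ℤ, D = 4 * d ∧ (d = 1 ∨ d = -1) := by
        rcases hD with h | h
        · exact ⟨1, by omega, Or.inl rfl⟩
        · exact ⟨-1, by omega, Or.inr rfl⟩
      obtain ⟨s, hs, hsval⟩ : ∃ s : ℤ, Y = 4 * s ∧ (s = 1 ∨ s = -1) := by
        rcases hY4 with h | h
        · exact ⟨1, by omega, Or.inl rfl⟩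
        · exact ⟨-1, by omega, Or.inr rfl⟩
      have hq1 : d * u1 = α * v1 + s * w1 := by
        have h4 : (4:ℤ) * (d * u1) = 4 * (α * v1 + s * w1) := by
          rw [hd, hα, hs] at hC1; linear_combination hC1
        exact mul_left_cancel₀ (by norm_num) h4
      have hq2 : d * u2 = α * v2 + s * w2 := by
        have h4 : (4:ℤ) * (d * u2) = 4 * (α * v2 + s * w2) := by
          rw [hd, hα, hs] at hC2; linear_combination hC2
        exact mul_left_cancel₀ (by norm_num) h4
      have hd2 : (d : ZMod 2) = 1 := by rcases hdval with h | h <;> rw [h] <;> decide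
      have hs2 : (s : ZMod 2) = 1 := by rcases hsval with h | h <;> rw [h] <;> decide
      have hα2 : (α : ZMod 2) = 1 := by
        have : ((α : ℤ) : ZMod 2) = ((2 * n + 1 : ℤ) : ZMod 2) := by rw [← hn]
        push_cast at this
        rw [this, show (2 : ZMod 2) = 0 from rfl]; ring
      have hu1 : (2:ℤ) ∣ u1 := by
        have hcast : ((u1 : ℤ) : ZMod 2) = 0 := by
          have := congrArg (fun z : ℤ => (z : ZMod 2)) hq1
          push_cast at this
          rw [hd2, hα2, hs2] at this
          have h1 := hz.1
          -- this : 1 * u1 = 1 * v1 + 1 * w1 in ZMod 2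
          have : (u1 : ZMod 2) = (v1 : ZMod 2) + (w1 : ZMod 2) := by
            linear_combination this
          rw [this]
          linear_combination h1
        rwa [ZMod.intCast_zmod_eq_zero_iff_dvd] at hcast
      have hu2 : (2:ℤ) ∣ u2 := by
        have hcast : ((u2 : ℤ) : ZMod 2) = 0 := by
          have := congrArg (fun z : ℤ => (z : ZMod 2)) hq2
          push_cast at this
          rw [hd2, hα2, hs2] at this
          have h2 := hz.2
          have : (u2 : ZMod 2) = (v2 : ZMod 2) + (w2 : ZMod 2) := by
            linear_combination this
          rw [this]
          linear_combination h2
        rwa [ZMod.intCast_zmod_eq_zero_iff_dvd] at hcast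
      exact not_both_even hu hu1 hu2
  refine ⟨hiii, ?_⟩
  -- statement (iv)
  intro hA4
  have h4A : (4:ℤ) ∣ A := by rcases hA4 with h | h <;> omega
  have h4Yc : (4:ℤ) ∣ Y * c := by
    have heq : Y * c = D * M - A := by linear_combination hcong
    rw [heq]
    exact dvd_sub (h4D.mul_right M) h4A
  obtain ⟨m', hm'⟩ := hcodd
  have hco2 : IsCoprime (2:ℤ) c := ⟨-m', 1, by rw [hm']; ring⟩
  have hco4 : IsCoprime (4:ℤ) c := by
    have h := hco2.mul_left hco2
    norm_num at h
    exact h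
  have h4Y : (4:ℤ) ∣ Y := hco4.dvd_of_dvd_mul_right h4Yc
  have hY3 : Y = 4 ∨ Y = -4 ∨ Y = 0 := by omega
  rcases hY3 with h | h | h
  · have := hiii (Or.inl h); omega
  · have := hiii (Or.inr h); omega
  · exact h

lemma core (A1 Y1 A2 Y2 : ℤ)
    (b1 : -4 ≤ A1) (b1' : A1 ≤ 4) (b2 : -4 ≤ Y1) (b2' : Y1 ≤ 4)
    (b3 : -4 ≤ A2) (b3' : A2 ≤ 4) (b4 : -4 ≤ Y2) (b4' : Y2 ≤ 4)
    (e1 : Y1 = 4 ∨ Y1 = -4 → A1 = 0) (f1 : A1 = 4 ∨ A1 = -4 → Y1 = 0)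
    (e2 : Y2 = 4 ∨ Y2 = -4 → A2 = 0) (f2 : A2 = 4 ∨ A2 = -4 → Y2 = 0)
    (hdet : A1 * Y2 - Y1 * A2 = 16 ∨ A1 * Y2 - Y1 * A2 = -16) :
    (Y1 = 0 ∧ A2 = 0) ∨ (A1 = 0 ∧ Y2 = 0) := by
  interval_cases A1 <;> interval_cases A2 <;> omega

lemma parallel_eq {a b c d : ℤ} (hab : IsCoprime a b) (hcd : IsCoprime c d)
    (h : a * d = b * c) : (c = a ∧ d = b) ∨ (c = -a ∧ d = -b) := by
  obtain ⟨x, y, hxy⟩ := hab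
  have hc : c = a * (x * c + y * d) := by linear_combination (-c) * hxy - y * h
  have hd : d = b * (x * c + y * d) := by linear_combination (-d) * hxy + x * h
  have hu : IsUnit (x * c + y * d) :=
    hcd.isUnit_of_dvd' ⟨a, by linear_combination hc⟩ ⟨b, by linear_combination hd⟩
  rcases Int.isUnit_iff.mp hu with h1 | h1 <;> rw [h1] at hc hd
  · left; constructor <;> omega
  · right; constructor <;> omega

/-- The geometric intersection number of two slopes on the torus, computed on
representative vectors in `ℤ × ℤ`: `Δ(v, w) = |det(v, w)|`. -/
def slopeDelta (v w : ℤ × ℤ) : ℤ := |v.1 * w.2 - v.2 * w.1|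

/-- Let `E` be a set of slopes on a torus (modeled as a set of primitive vectors in `ℤ²`
closed under negation, i.e. closed under the identification `v ∼ -v`) such that the
maximum of `Δ(c₁,c₂)` over pairs `c₁, c₂ ∈ E` equals `4`.  Then there is exactly one
unordered pair of slopes `{c₁, c₂} ⊆ E` with `Δ(c₁,c₂) = 4`. -/
theorem stmt_4 (E : Set (ℤ × ℤ))
    (hprim : ∀ v ∈ E, IsCoprime v.1 v.2)
    (hneg : ∀ v ∈ E, -v ∈ E)
    (hle : ∀ v ∈ E, ∀ w ∈ E, slopeDelta v w ≤ 4)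
    (hex : ∃ v ∈ E, ∃ w ∈ E, slopeDelta v w = 4) :
    ∃ v ∈ E, ∃ w ∈ E, slopeDelta v w = 4 ∧
      ∀ v' ∈ E, ∀ w' ∈ E, slopeDelta v' w' = 4 →
        (((v' = v ∨ v' = -v) ∧ (w' = w ∨ w' = -w)) ∨
          ((v' = w ∨ v' = -w) ∧ (w' = v ∨ w' = -v))) := by
  obtain ⟨v, hv, w, hw, hvw⟩ := hex
  have hD : v.1 * w.2 - v.2 * w.1 = 4 ∨ v.1 * w.2 - v.2 * w.1 = -4 := by
    have h := hvw
    simp only [slopeDelta] at h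
    rcases abs_cases (v.1 * w.2 - v.2 * w.1) with ⟨h1, _⟩ | ⟨h1, _⟩ <;> omega
  refine ⟨v, hv, w, hw, hvw, ?_⟩
  intro p hp q hq hpq
  have habs : ∀ u ∈ E, (-4 ≤ u.1 * w.2 - u.2 * w.1 ∧ u.1 * w.2 - u.2 * w.1 ≤ 4) ∧
      (-4 ≤ v.1 * u.2 - v.2 * u.1 ∧ v.1 * u.2 - v.2 * u.1 ≤ 4) := by
    intro u hu
    have h1 := hle u hu w hw
    have h2 := hle v hv u hu
    simp only [slopeDelta] at h1 h2
    exact ⟨abs_le.mp h1, abs_le.mp h2⟩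
  obtain ⟨hApb, hYpb⟩ := habs p hp
  obtain ⟨hAqb, hYqb⟩ := habs q hq
  have keyp := key v.1 v.2 w.1 w.2 p.1 p.2 (hprim v hv) (hprim w hw) (hprim p hp)
      hD hApb hYpb
  have keyq := key v.1 v.2 w.1 w.2 q.1 q.2 (hprim v hv) (hprim w hw) (hprim q hq)
      hD hAqb hYqb
  have hpq4 : p.1 * q.2 - p.2 * q.1 = 4 ∨ p.1 * q.2 - p.2 * q.1 = -4 := by
    have h := hpq
    simp only [slopeDelta] at h
    rcases abs_cases (p.1 * q.2 - p.2 * q.1) with ⟨h1, _⟩ | ⟨h1, _⟩ <;> omega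
  have hid : (v.1 * w.2 - v.2 * w.1) * (p.1 * q.2 - p.2 * q.1)
      = (p.1 * w.2 - p.2 * w.1) * (v.1 * q.2 - v.2 * q.1)
        - (v.1 * p.2 - v.2 * p.1) * (q.1 * w.2 - q.2 * w.1) := by ring
  have h16 : (p.1 * w.2 - p.2 * w.1) * (v.1 * q.2 - v.2 * q.1)
        - (v.1 * p.2 - v.2 * p.1) * (q.1 * w.2 - q.2 * w.1) = 16 ∨
      (p.1 * w.2 - p.2 * w.1) * (v.1 * q.2 - v.2 * q.1)
        - (v.1 * p.2 - v.2 * p.1) * (q.1 * w.2 - q.2 * w.1) = -16 := by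
    rcases hD with h | h <;> rcases hpq4 with h' | h' <;> rw [h, h'] at hid <;>
      [left; right; right; left] <;> linarith [hid]
  have hco := core (p.1 * w.2 - p.2 * w.1) (v.1 * p.2 - v.2 * p.1)
      (q.1 * w.2 - q.2 * w.1) (v.1 * q.2 - v.2 * q.1)
      hApb.1 hApb.2 hYpb.1 hYpb.2 hAqb.1 hAqb.2 hYqb.1 hYqb.2
      keyp.1 keyp.2 keyq.1 keyq.2 h16
  rcases hco with ⟨hY0, hA0⟩ | ⟨hA0, hY0⟩
  · left
    constructor
    · rcases parallel_eq (hprim v hv) (hprim p hp)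
          (show v.1 * p.2 = v.2 * p.1 by linear_combination hY0) with ⟨h1, h2⟩ | ⟨h1, h2⟩
      · exact Or.inl (Prod.ext_iff.mpr ⟨h1, h2⟩)
      · exact Or.inr (Prod.ext_iff.mpr ⟨by simp [h1], by simp [h2]⟩)
    · rcases parallel_eq (hprim w hw) (hprim q hq)
          (show w.1 * q.2 = w.2 * q.1 by linear_combination -hA0) with ⟨h1, h2⟩ | ⟨h1, h2⟩
      · exact Or.inl (Prod.ext_iff.mpr ⟨h1, h2⟩)
      · exact Or.inr (Prod.ext_iff.mpr ⟨by simp [h1], by simp [h2]⟩)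
  · right
    constructor
    · rcases parallel_eq (hprim w hw) (hprim p hp)
          (show w.1 * p.2 = w.2 * p.1 by linear_combination -hA0) with ⟨h1, h2⟩ | ⟨h1, h2⟩
      · exact Or.inl (Prod.ext_iff.mpr ⟨h1, h2⟩)
      · exact Or.inr (Prod.ext_iff.mpr ⟨by simp [h1], by simp [h2]⟩)
    · rcases parallel_eq (hprim v hv) (hprim q hq)
          (show v.1 * q.2 = v.2 * q.1 by linear_combination hY0) with ⟨h1, h2⟩ | ⟨h1, h2⟩
      · exact Or.inl (Prod.ext_iff.mpr ⟨h1, h2⟩)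
      · exact Or.inr (Prod.ext_iff.mpr ⟨by simp [h1], by simp [h2]⟩)
end

section
/- Let c1, c2 be slopes on ℤ² and c1', c2' slopes on ℤ² with Δ(c1,c2) = Δ(c1',c2') = 4. Then there exist exactly two elements of GL(2,ℤ)/{±I} whose induced maps on slopes send the set {c1,c2} onto the set {c1',c2'}. -/
/-- Two vectors represent the same slope iff they agree up to sign. -/
def SlopeEq (v w : ℤ × ℤ) : Prop := v = w ∨ v = -w

/-- The map on slopes induced by `ψ ∈ GL(2,ℤ)` sends the unordered pair of slopes
`{[c₁],[c₂]}` onto `{[c₁'],[c₂']}`. -/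
def SendsPairToPair (ψ : (ℤ × ℤ) ≃+ (ℤ × ℤ)) (c₁ c₂ c₁' c₂' : ℤ × ℤ) : Prop :=
  (SlopeEq (ψ c₁) c₁' ∧ SlopeEq (ψ c₂) c₂') ∨ (SlopeEq (ψ c₁) c₂' ∧ SlopeEq (ψ c₂) c₁')

/-- Two elements of `GL(2,ℤ)` represent the same class in `GL(2,ℤ)/{±I}`. -/
def SameUpToSign (ψ ψ' : (ℤ × ℤ) ≃+ (ℤ × ℤ)) : Prop :=
  ψ = ψ' ∨ ∀ v : ℤ × ℤ, ψ v = -(ψ' v)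

def basisEquiv (m l : ℤ × ℤ) (e : ℤ) (hdet : m.1 * l.2 - m.2 * l.1 = e) (he : e * e = 1) :
    (ℤ × ℤ) ≃+ (ℤ × ℤ) where
  toFun v := (v.1 * m.1 + v.2 * l.1, v.1 * m.2 + v.2 * l.2)
  invFun v := (e * (l.2 * v.1 - l.1 * v.2), e * (m.1 * v.2 - m.2 * v.1))
  left_inv v := by
    refine Prod.ext ?_ ?_ <;> simp
    · linear_combination (e * v.1) * hdet + v.1 * he
    · linear_combination (e * v.2) * hdet + v.2 * he
  right_inv v := by
    refine Prod.ext ?_ ?_ <;> simp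
    · linear_combination (e * v.1) * hdet + v.1 * he
    · linear_combination (e * v.2) * hdet + v.2 * he
  map_add' v w := by refine Prod.ext ?_ ?_ <;> simp <;> ring

@[simp] lemma basisEquiv_apply (m l : ℤ × ℤ) (e : ℤ) (hdet : m.1 * l.2 - m.2 * l.1 = e)
    (he : e * e = 1) (v : ℤ × ℤ) :
    basisEquiv m l e hdet he v = (v.1 * m.1 + v.2 * l.1, v.1 * m.2 + v.2 * l.2) := rfl

def swapS : (ℤ × ℤ) ≃+ (ℤ × ℤ) where
  toFun v := (v.1, 4 * v.1 - v.2)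
  invFun v := (v.1, 4 * v.1 - v.2)
  left_inv v := by refine Prod.ext ?_ ?_ <;> simp
  right_inv v := by refine Prod.ext ?_ ?_ <;> simp
  map_add' v w := by refine Prod.ext ?_ ?_ <;> simp <;> ring

@[simp] lemma swapS_apply (v : ℤ × ℤ) : swapS v = (v.1, 4 * v.1 - v.2) := rfl

lemma addequiv_apply (W : (ℤ × ℤ) ≃+ (ℤ × ℤ)) (v : ℤ × ℤ) :
    W v = (v.1 * (W (1,0)).1 + v.2 * (W (0,1)).1,
           v.1 * (W (1,0)).2 + v.2 * (W (0,1)).2) := by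
  have hv : v = v.1 • ((1:ℤ),(0:ℤ)) + v.2 • ((0:ℤ),(1:ℤ)) := by
    refine Prod.ext ?_ ?_ <;> simp
  rw [hv, map_add, map_zsmul, map_zsmul]
  refine Prod.ext ?_ ?_ <;> simp [smul_eq_mul] <;> ring

lemma W04 (W : (ℤ × ℤ) ≃+ (ℤ × ℤ)) :
    W (1,4) - W (1,0) = (4 * (W (0,1)).1, 4 * (W (0,1)).2) := by
  have h : ((1:ℤ),(4:ℤ)) = (1,0) + ((0,1) + ((0,1) + ((0,1) + (0,1)))) := by
    refine Prod.ext ?_ ?_ <;> simp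
  rw [h, map_add, map_add, map_add, map_add]
  refine Prod.ext ?_ ?_ <;> simp <;> ring

-- normal form lemma (proved in t2, pasted here)
lemma normal_form (c₁ c₂ : ℤ × ℤ) (h₁ : IsCoprime c₁.1 c₁.2) (h₂ : IsCoprime c₂.1 c₂.2)
    (hΔ : slopeDelta c₁ c₂ = 4) :
    ∃ (l : ℤ × ℤ) (e t : ℤ), c₁.1 * l.2 - c₁.2 * l.1 = e ∧ e * e = 1 ∧ (t = 1 ∨ t = -1) ∧
      c₂ = (t * (c₁.1 + 4 * l.1), t * (c₁.2 + 4 * l.2)) := by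
  obtain ⟨a, b, hab⟩ := h₁
  obtain ⟨p, q, hpq⟩ := h₂
  set y : ℤ := c₁.1 * c₂.2 - c₁.2 * c₂.1 with hy
  have hy4 : y = 4 ∨ y = -4 := by
    have := hΔ
    unfold slopeDelta at this
    rcases (abs_eq (by norm_num : (0:ℤ) ≤ 4)).mp this with h | h
    · left; omega
    · right; omega
  set x : ℤ := c₂.1 * a + c₂.2 * b with hx
  have hc21 : c₂.1 = x * c₁.1 - y * b := by linear_combination (-c₂.1) * hab
  have hc22 : c₂.2 = x * c₁.2 + y * a := by linear_combination (-c₂.2) * hab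
  obtain ⟨w, hw, hw1⟩ : ∃ w : ℤ, y = 4 * w ∧ (w = 1 ∨ w = -1) := by
    rcases hy4 with h | h
    · exact ⟨1, by omega, Or.inl rfl⟩
    · exact ⟨-1, by omega, Or.inr rfl⟩
  have hxodd : ¬ (2:ℤ) ∣ x := by
    intro ⟨c, hc⟩
    have key : x * (p * c₁.1 + q * c₁.2) + y * (q * a - p * b) = 1 := by
      linear_combination hpq - p * hc21 - q * hc22
    have : (2:ℤ) ∣ 1 := ⟨c * (p * c₁.1 + q * c₁.2) + 2 * w * (q * a - p * b), by
      linear_combination -key + (p * c₁.1 + q * c₁.2) * hc + (q * a - p * b) * hw⟩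
    norm_num at this
  obtain ⟨t, ht1, k, hk⟩ : ∃ t : ℤ, (t = 1 ∨ t = -1) ∧ ∃ k : ℤ, 4 * k = x * t - 1 := by
    by_cases h4 : x % 4 = 1
    · exact ⟨1, Or.inl rfl, (x - 1) / 4, by omega⟩
    · refine ⟨-1, Or.inr rfl, (-x - 1) / 4, by omega⟩
  have ht2 : t * t = 1 := by rcases ht1 with h | h <;> simp [h]
  refine ⟨(k * c₁.1 - t * w * b, k * c₁.2 + t * w * a), t * w, t, ?_, ?_, ht1, ?_⟩
  · linear_combination t * w * hab
  · rcases ht1 with h | h <;> rcases hw1 with h' | h' <;> simp [h, h']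
  · refine Prod.ext ?_ ?_ <;> simp
    · linear_combination hc21 - (t * c₁.1) * hk + (4 * w * b - x * c₁.1) * ht2 - b * hw
    · linear_combination hc22 - (t * c₁.2) * hk - (x * c₁.2 + 4 * w * a) * ht2 + a * hw


/-- Let `c₁, c₂` be slopes on `ℤ²` and `c₁', c₂'` slopes on `ℤ²` with
`Δ(c₁,c₂) = Δ(c₁',c₂') = 4`.  Then there exist exactly two elements of `GL(2,ℤ)/{±I}`
whose induced maps on slopes send the set `{c₁,c₂}` onto the set `{c₁',c₂'}`. -/
theorem stmt_5 (c₁ c₂ c₁' c₂' : ℤ × ℤ)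
    (h₁ : IsCoprime c₁.1 c₁.2) (h₂ : IsCoprime c₂.1 c₂.2)
    (h₁' : IsCoprime c₁'.1 c₁'.2) (h₂' : IsCoprime c₂'.1 c₂'.2)
    (hΔ : slopeDelta c₁ c₂ = 4) (hΔ' : slopeDelta c₁' c₂' = 4) :
    ∃ ψ₁ ψ₂ : (ℤ × ℤ) ≃+ (ℤ × ℤ),
      ¬ SameUpToSign ψ₁ ψ₂ ∧
      SendsPairToPair ψ₁ c₁ c₂ c₁' c₂' ∧
      SendsPairToPair ψ₂ c₁ c₂ c₁' c₂' ∧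
      ∀ ψ : (ℤ × ℤ) ≃+ (ℤ × ℤ), SendsPairToPair ψ c₁ c₂ c₁' c₂' →
        SameUpToSign ψ ψ₁ ∨ SameUpToSign ψ ψ₂ := by
  obtain ⟨l, e, t, hdet, he, ht, hc2⟩ := normal_form c₁ c₂ h₁ h₂ hΔ
  obtain ⟨l', e', t', hdet', he', ht', hc2'⟩ := normal_form c₁' c₂' h₁' h₂' hΔ'
  set B := basisEquiv c₁ l e hdet he with hBdef
  set B' := basisEquiv c₁' l' e' hdet' he' with hB'def
  have hB10 : B ((1:ℤ),(0:ℤ)) = c₁ := by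
    refine Prod.ext ?_ ?_ <;> simp [hBdef]
  have hBt : B ((t:ℤ), 4*t) = c₂ := by
    rw [hc2]; refine Prod.ext ?_ ?_ <;> simp [hBdef] <;> ring
  have hB'10 : B' ((1:ℤ),(0:ℤ)) = c₁' := by
    refine Prod.ext ?_ ?_ <;> simp [hB'def]
  have hB't : B' ((t':ℤ), 4*t') = c₂' := by
    rw [hc2']; refine Prod.ext ?_ ?_ <;> simp [hB'def] <;> ring
  have hslope : ∀ x y : ℤ × ℤ, (x = y ∨ x = -y) → SlopeEq (B' x) (B' y) := by
    rintro x y (rfl | rfl)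
    · exact Or.inl rfl
    · exact Or.inr (by rw [map_neg])
  refine ⟨B.symm.trans B', B.symm.trans (swapS.trans B'), ?_, ?_, ?_, ?_⟩
  · rintro (h | h)
    · have h0 := DFunLike.congr_fun h (B ((1:ℤ),(0:ℤ)))
      simp only [AddEquiv.trans_apply, AddEquiv.symm_apply_apply, swapS_apply] at h0
      have := B'.injective h0
      simp [Prod.ext_iff] at this
    · have h0 := h (B ((1:ℤ),(0:ℤ)))
      simp only [AddEquiv.trans_apply, AddEquiv.symm_apply_apply, swapS_apply, ← map_neg] at h0
      have := B'.injective h0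
      simp [Prod.ext_iff] at this
  · -- ψ₁ sends pair
    left
    constructor
    · rw [← hB'10, ← hB10]
      simp only [AddEquiv.trans_apply, AddEquiv.symm_apply_apply]
      exact Or.inl rfl
    · rw [← hB't, ← hBt]
      simp only [AddEquiv.trans_apply, AddEquiv.symm_apply_apply]
      apply hslope
      rcases ht with rfl | rfl <;> rcases ht' with rfl | rfl <;>
        simp [Prod.ext_iff] <;> norm_num
  · -- ψ₂ sends pair
    right
    constructor
    · rw [← hB't, ← hB10]
      simp only [AddEquiv.trans_apply, AddEquiv.symm_apply_apply, swapS_apply]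
      apply hslope
      rcases ht' with rfl | rfl <;> simp [Prod.ext_iff] <;> norm_num
    · rw [← hB'10, ← hBt]
      simp only [AddEquiv.trans_apply, AddEquiv.symm_apply_apply, swapS_apply]
      apply hslope
      rcases ht with rfl | rfl <;> simp [Prod.ext_iff] <;> norm_num
  · -- uniqueness
    intro ψ hψ
    set W : (ℤ × ℤ) ≃+ (ℤ × ℤ) := (B.trans ψ).trans B'.symm with hWdef
    have hWB : ∀ x : ℤ × ℤ, ψ (B x) = B' (W x) := by
      intro x; simp [hWdef, AddEquiv.trans_apply]
    have hψ1 : ψ c₁ = B' (W (1,0)) := by rw [← hB10, hWB]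
    have hψ2 : ψ c₂ = B' (W (t, 4*t)) := by rw [← hBt, hWB]
    have hinj : ∀ x y : ℤ × ℤ, SlopeEq (B' x) (B' y) → x = y ∨ x = -y := by
      rintro x y (h | h)
      · exact Or.inl (B'.injective h)
      · right; apply B'.injective; rw [h, map_neg]
    rcases hψ with ⟨ha, hb⟩ | ⟨ha, hb⟩
    · -- identity-type: ψ ~ ψ₁
      left
      rw [hψ1, ← hB'10] at ha
      rw [hψ2, ← hB't] at hb
      obtain ⟨s, hs1, hW10⟩ : ∃ s : ℤ, (s = 1 ∨ s = -1) ∧ W (1,0) = (s, 0) := by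
        rcases hinj _ _ ha with h | h
        · exact ⟨1, Or.inl rfl, h⟩
        · exact ⟨-1, Or.inr rfl, by rw [h]; rfl⟩
      obtain ⟨u, hu1, hW14⟩ : ∃ u : ℤ, (u = 1 ∨ u = -1) ∧ W (1,4) = (u, 4*u) := by
        rcases hinj _ _ hb with h | h <;> rcases ht with rfl | rfl
        · exact ⟨t', ht', by simpa using h⟩
        · refine ⟨-t', by omega, ?_⟩
          have : W (-(1, 4)) = (t', 4*t') := by simpa using h
          rw [map_neg] at this
          have := neg_eq_iff_eq_neg.mp this
          rw [this]; refine Prod.ext ?_ ?_ <;> simp <;> ring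
        · refine ⟨-t', by omega, ?_⟩
          have : W (1,4) = -(t', 4*t') := by simpa using h
          rw [this]; refine Prod.ext ?_ ?_ <;> simp <;> ring
        · refine ⟨t', ht', ?_⟩
          have : W (-(1, 4)) = -(t', 4*t') := by simpa using h
          rw [map_neg, neg_inj] at this
          exact this
      have h04 := W04 W
      rw [hW10, hW14] at h04
      have h1 : 4 * (W (0,1)).1 = u - 1 * s := by
        have := congrArg Prod.fst h04; simpa using this.symm
      have h2 : 4 * (W (0,1)).2 = 4 * u - 0 := by
        have := congrArg Prod.snd h04; simpa using this.symm
      have hus : u = s := by omega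
      have hW01 : W (0,1) = (0, s) := by
        refine Prod.ext ?_ ?_ <;> simp <;> omega
      have hWv : ∀ v : ℤ × ℤ, W v = (s * v.1, s * v.2) := by
        intro v
        rw [addequiv_apply W v, hW10, hW01]
        refine Prod.ext ?_ ?_ <;> simp <;> ring
      rcases hs1 with rfl | rfl
      · left
        apply AddEquiv.ext
        intro v
        have : ψ (B (B.symm v)) = B' (W (B.symm v)) := hWB _
        rw [AddEquiv.apply_symm_apply] at this
        rw [this, hWv]
        simp [AddEquiv.trans_apply]
      · right
        intro v
        have : ψ (B (B.symm v)) = B' (W (B.symm v)) := hWB _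
        rw [AddEquiv.apply_symm_apply] at this
        rw [this, hWv]
        simp only [AddEquiv.trans_apply]
        rw [← map_neg]
        congr 1
        refine Prod.ext ?_ ?_ <;> simp
    · -- swap-type: ψ ~ ψ₂
      right
      rw [hψ1, ← hB't] at ha
      rw [hψ2, ← hB'10] at hb
      obtain ⟨s, hs1, hW10⟩ : ∃ s : ℤ, (s = 1 ∨ s = -1) ∧ W (1,0) = (s, 4*s) := by
        rcases hinj _ _ ha with h | h
        · exact ⟨t', ht', h⟩
        · refine ⟨-t', by omega, ?_⟩
          rw [h]; refine Prod.ext ?_ ?_ <;> simp <;> ring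
      obtain ⟨u, hu1, hW14⟩ : ∃ u : ℤ, (u = 1 ∨ u = -1) ∧ W (1,4) = (u, 0) := by
        rcases hinj _ _ hb with h | h <;> rcases ht with rfl | rfl
        · exact ⟨1, Or.inl rfl, by simpa using h⟩
        · refine ⟨-1, Or.inr rfl, ?_⟩
          have : W (-(1, 4)) = (1, 0) := by simpa using h
          rw [map_neg] at this
          have := neg_eq_iff_eq_neg.mp this
          rw [this]; refine Prod.ext ?_ ?_ <;> simp
        · refine ⟨-1, Or.inr rfl, ?_⟩
          have : W (1,4) = -(1, 0) := by simpa using h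
          rw [this]; refine Prod.ext ?_ ?_ <;> simp
        · refine ⟨1, Or.inl rfl, ?_⟩
          have : W (-(1, 4)) = -(1, 0) := by simpa using h
          rw [map_neg, neg_inj] at this
          exact this
      have h04 := W04 W
      rw [hW10, hW14] at h04
      have h1 : 4 * (W (0,1)).1 = u - s := by
        have := congrArg Prod.fst h04; simpa using this.symm
      have h2 : 4 * (W (0,1)).2 = 0 - 4*s := by
        have := congrArg Prod.snd h04; simpa using this.symm
      have hus : u = s := by omega
      have hW01 : W (0,1) = (0, -s) := by
        refine Prod.ext ?_ ?_ <;> simp <;> omega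
      have hWv : ∀ v : ℤ × ℤ, W v = (s * v.1, s * (4 * v.1 - v.2)) := by
        intro v
        rw [addequiv_apply W v, hW10, hW01]
        refine Prod.ext ?_ ?_ <;> simp <;> ring
      rcases hs1 with rfl | rfl
      · left
        apply AddEquiv.ext
        intro v
        have hv : ψ (B (B.symm v)) = B' (W (B.symm v)) := hWB _
        rw [AddEquiv.apply_symm_apply] at hv
        rw [hv, hWv]
        simp only [AddEquiv.trans_apply, swapS_apply]
        congr 1
        refine Prod.ext ?_ ?_ <;> simp
      · right
        intro v
        have hv : ψ (B (B.symm v)) = B' (W (B.symm v)) := hWB _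
        rw [AddEquiv.apply_symm_apply] at hv
        rw [hv, hWv]
        simp only [AddEquiv.trans_apply, swapS_apply]
        rw [← map_neg]
        congr 1
        refine Prod.ext ?_ ?_ <;> simp <;> try ring
end

section
/- If Δ(c1,c2) = 4 for two slopes c1, c2 on ℤ², then there exists a basis (μ,λ) of ℤ² such that c1 = [μ] and c2 = [μ + 4λ]. -/
/-- If `Δ(c₁,c₂) = 4` for two slopes `c₁, c₂` on `ℤ²` (represented by primitive vectors,
up to sign), then there exists a basis `(μ, λ)` of `ℤ²` (i.e. a pair of vectors with
determinant `±1`) such that `c₁ = [μ]` and `c₂ = [μ + 4λ]`. -/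
theorem stmt_6 (c₁ c₂ : ℤ × ℤ) (h₁ : IsCoprime c₁.1 c₁.2) (h₂ : IsCoprime c₂.1 c₂.2)
    (hΔ : slopeDelta c₁ c₂ = 4) :
    ∃ μ lam : ℤ × ℤ,
      (μ.1 * lam.2 - μ.2 * lam.1 = 1 ∨ μ.1 * lam.2 - μ.2 * lam.1 = -1) ∧
      (c₁ = μ ∨ c₁ = -μ) ∧
      (c₂ = μ + (4 : ℤ) • lam ∨ c₂ = -(μ + (4 : ℤ) • lam)) := by
  obtain ⟨u, v, huv⟩ := h₁
  obtain ⟨u', v', huv'⟩ := h₂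
  obtain ⟨p, q⟩ := c₁
  obtain ⟨r, s⟩ := c₂
  simp only at huv huv' ⊢
  unfold slopeDelta at hΔ
  simp only at hΔ
  have hD : p*s - q*r = 4 ∨ p*s - q*r = -4 := (abs_eq (by norm_num : (0:ℤ) ≤ 4)).mp hΔ
  set a := r*u + s*v with ha
  have hr : r = a*p - (p*s - q*r)*v := by linear_combination (-r)*huv
  have hs : s = a*q + (p*s - q*r)*u := by linear_combination (-s)*huv
  -- a is odd
  have hodd : a % 2 = 1 := by
    rcases Int.emod_two_eq a with h | h
    · exfalso
      obtain ⟨m, hm⟩ : (2:ℤ) ∣ a := by omega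
      have h2r : (2:ℤ) ∣ r := by
        rcases hD with hD | hD <;> rw [hD] at hr
        · exact ⟨m*p - 2*v, by linear_combination hr + p*hm⟩
        · exact ⟨m*p + 2*v, by linear_combination hr + p*hm⟩
      have h2s : (2:ℤ) ∣ s := by
        rcases hD with hD | hD <;> rw [hD] at hs
        · exact ⟨m*q + 2*u, by linear_combination hs + q*hm⟩
        · exact ⟨m*q - 2*u, by linear_combination hs + q*hm⟩
      have h21 : (2:ℤ) ∣ 1 := by
        rw [← huv']
        exact dvd_add (h2r.mul_left u') (h2s.mul_left v')
      norm_num at h21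
    · exact h
  have hk13 : a % 4 = 1 ∨ a % 4 = 3 := by omega
  obtain ⟨k, hk⟩ : ∃ k : ℤ, a = 4*k + a % 4 := ⟨a / 4, by omega⟩
  rcases hD with hD | hD <;> rw [hD] at hr hs <;> rcases hk13 with h13 | h13 <;>
      rw [h13] at hk
  · -- D = 4, a = 4k+1 : lam = (k*p - v, k*q + u)
    refine ⟨(p, q), (k*p - v, k*q + u), Or.inl (by linear_combination huv),
      Or.inl rfl, Or.inl ?_⟩
    simp only [Prod.ext_iff, Prod.mk_add_mk, Prod.smul_mk, smul_eq_mul, Prod.fst_add,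
      Prod.snd_add]
    constructor
    · linear_combination hr + p*hk
    · linear_combination hs + q*hk
  · -- D = 4, a = 4k+3 = 4(k+1)-1 : lam = (-(k+1)*p + v, -(k+1)*q - u)
    refine ⟨(p, q), (-(k+1)*p + v, -(k+1)*q - u), Or.inr (by linear_combination (-1)*huv),
      Or.inl rfl, Or.inr ?_⟩
    simp only [Prod.ext_iff, Prod.mk_add_mk, Prod.smul_mk, smul_eq_mul, Prod.neg_mk,
      Prod.fst_neg, Prod.snd_neg, Prod.fst_add, Prod.snd_add]
    constructor
    · linear_combination hr + p*hk
    · linear_combination hs + q*hk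
  · -- D = -4, a = 4k+1 : lam = (k*p + v, k*q - u)
    refine ⟨(p, q), (k*p + v, k*q - u), Or.inr (by linear_combination (-1)*huv),
      Or.inl rfl, Or.inl ?_⟩
    simp only [Prod.ext_iff, Prod.mk_add_mk, Prod.smul_mk, smul_eq_mul, Prod.fst_add,
      Prod.snd_add]
    constructor
    · linear_combination hr + p*hk
    · linear_combination hs + q*hk
  · -- D = -4, a = 4k+3 : lam = (-(k+1)*p - v, -(k+1)*q + u)
    refine ⟨(p, q), (-(k+1)*p - v, -(k+1)*q + u), Or.inl (by linear_combination huv),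
      Or.inl rfl, Or.inr ?_⟩
    simp only [Prod.ext_iff, Prod.mk_add_mk, Prod.smul_mk, smul_eq_mul, Prod.neg_mk,
      Prod.fst_neg, Prod.snd_neg, Prod.fst_add, Prod.snd_add]
    constructor
    · linear_combination hr + p*hk
    · linear_combination hs + q*hk
end

section
/- Let p, q be coprime integers with q ≠ 0. The quotient group ℤ³/⟨(0,2,2), (2q, p, 2q)⟩ is isomorphic to ℤ ⊕ ℤ/2ℤ ⊕ ℤ/2ℤ if p is even, and is isomorphic to ℤ ⊕ ℤ/2ℤ if p is odd. -/
private lemma aux_mem_closure {a b x : ℤ × ℤ × ℤ} (m n : ℤ)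
    (h : x = m • a + n • b) : x ∈ AddSubgroup.closure {a, b} := by
  subst h
  have ha : a ∈ AddSubgroup.closure {a, b} :=
    AddSubgroup.subset_closure (Set.mem_insert _ _)
  have hb : b ∈ AddSubgroup.closure {a, b} :=
    AddSubgroup.subset_closure (Set.mem_insert_of_mem _ rfl)
  exact add_mem (AddSubgroup.zsmul_mem _ ha m) (AddSubgroup.zsmul_mem _ hb n)

private lemma aux_smul_eq (m n a1 a2 a3 b1 b2 b3 : ℤ) :
    m • ((a1, a2, a3) : ℤ × ℤ × ℤ) + n • ((b1, b2, b3) : ℤ × ℤ × ℤ)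
      = (m*a1 + n*b1, m*a2 + n*b2, m*a3 + n*b3) := by
  simp [Prod.smul_mk, smul_eq_mul, Prod.mk_add_mk]

private lemma aux_cast_eq {a b : ℤ} (h : (2:ℤ) ∣ a - b) : ((a : ZMod 2)) = (b : ZMod 2) := by
  have := (ZMod.intCast_zmod_eq_zero_iff_dvd (a - b) 2).mpr (by exact_mod_cast h)
  push_cast at this
  exact sub_eq_zero.mp this

private lemma aux_cast_zero {a : ℤ} (h : (2:ℤ) ∣ a) : ((a : ZMod 2)) = 0 :=
  (ZMod.intCast_zmod_eq_zero_iff_dvd a 2).mpr (by exact_mod_cast h)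

/-- Let `p, q` be coprime integers with `q ≠ 0`.  The quotient group
`ℤ³/⟨(0,2,2), (2q, p, 2q)⟩` is isomorphic to `ℤ ⊕ ℤ/2ℤ ⊕ ℤ/2ℤ` if `p` is even, and is
isomorphic to `ℤ ⊕ ℤ/2ℤ` if `p` is odd. -/
theorem stmt_8 (p q : ℤ) (hpq : IsCoprime p q) (hq : q ≠ 0) :
    (Even p →
      Nonempty (((ℤ × ℤ × ℤ) ⧸
          AddSubgroup.closure {((0 : ℤ), (2 : ℤ), (2 : ℤ)), (2 * q, p, 2 * q)}) ≃+
        ℤ × ZMod 2 × ZMod 2)) ∧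
    (Odd p →
      Nonempty (((ℤ × ℤ × ℤ) ⧸
          AddSubgroup.closure {((0 : ℤ), (2 : ℤ), (2 : ℤ)), (2 * q, p, 2 * q)}) ≃+
        ℤ × ZMod 2)) := by
  constructor
  · -- Even case
    rintro ⟨m, hm⟩
    have hq_odd : Odd q := by
      rw [← Int.not_even_iff_odd]
      intro hq2
      obtain ⟨c, hc⟩ := hq2
      have : IsUnit (2:ℤ) := hpq.isUnit_of_dvd' ⟨m, by omega⟩ ⟨c, by omega⟩
      rw [Int.isUnit_iff] at this
      omega
    obtain ⟨r, hr⟩ := hq_odd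
    have hmq : IsCoprime m q := by
      have h2 : IsCoprime (2*m) q := by rwa [show 2*m = p by omega]
      exact h2.of_mul_left_right
    obtain ⟨s, t, hst⟩ : IsCoprime (m - q) q := by
      have := hmq.add_mul_left_left (-1)
      simpa [mul_neg_one, ← sub_eq_add_neg] using this
    have hco' : IsCoprime (m - q) q := ⟨s, t, hst⟩
    set f : (ℤ × ℤ × ℤ) →+ ℤ × ZMod 2 × ZMod 2 := AddMonoidHom.mk'
      (fun v => ((m - q) * v.1 + q * (v.2.2 - v.2.1), ((v.1 : ZMod 2), (v.2.2 : ZMod 2))))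
      (by
        rintro ⟨x1, y1, z1⟩ ⟨x2, y2, z2⟩
        refine Prod.ext ?_ (Prod.ext ?_ ?_) <;> simp <;> push_cast <;> ring) with hf
    have hfapp : ∀ x y z : ℤ,
        f (x, y, z) = ((m - q) * x + q * (z - y), ((x : ZMod 2), (z : ZMod 2))) := by
      intro x y z; rfl
    have hsurj : Function.Surjective f := by
      rintro ⟨n, c2, c3⟩
      obtain ⟨a, ha⟩ := ZMod.intCast_surjective c2
      obtain ⟨b, hb⟩ := ZMod.intCast_surjective c3
      set N := n - q * b with hN
      refine ⟨(s*N + q*(a - s*N), -(t*N) + (m-q)*(a - s*N), b), ?_⟩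
      rw [hfapp]
      refine Prod.ext ?_ (Prod.ext ?_ ?_)
      · show (m - q) * (s*N + q*(a - s*N)) + q * (b - (-(t*N) + (m-q)*(a - s*N))) = n
        linear_combination N * hst
      · show ((s*N + q*(a - s*N) : ℤ) : ZMod 2) = c2
        rw [← ha]
        exact aux_cast_eq ⟨r * (a - s*N), by linear_combination (a - s*N) * hr⟩
      · exact hb
    have hker : f.ker = AddSubgroup.closure {((0:ℤ),(2:ℤ),(2:ℤ)), (2*q, p, 2*q)} := by
      apply le_antisymm
      · rintro ⟨x, y, z⟩ hv
        have hv' : f (x, y, z) = 0 := hv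
        rw [hfapp, Prod.mk_eq_zero, Prod.mk_eq_zero] at hv'
        obtain ⟨h1, h2, h3⟩ := hv'
        have hx2 : (2:ℤ) ∣ x := by
          exact_mod_cast (ZMod.intCast_zmod_eq_zero_iff_dvd x 2).mp h2
        have hz2 : (2:ℤ) ∣ z := by
          exact_mod_cast (ZMod.intCast_zmod_eq_zero_iff_dvd z 2).mp h3
        have hqx : q ∣ x := by
          refine (IsCoprime.symm hco').dvd_of_dvd_mul_left ⟨y - z, ?_⟩
          linear_combination h1
        obtain ⟨b0, hb0⟩ := hqx
        obtain ⟨b', hb'⟩ : (2:ℤ) ∣ b0 := by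
          rcases (Int.prime_two.dvd_mul.mp (hb0 ▸ hx2)) with h | h
          · omega
          · exact h
        obtain ⟨c, hc⟩ := hz2
        have hy : y = z + (m - q) * b0 := by
          have h0 : q * ((m - q) * b0 - (y - z)) = 0 := by
            linear_combination h1 - (m - q) * hb0
          have := (mul_eq_zero.mp h0).resolve_left hq
          linarith
        refine aux_mem_closure (c - q * b') b' ?_
        rw [aux_smul_eq, Prod.mk.injEq, Prod.mk.injEq]
        refine ⟨?_, ?_, ?_⟩
        · linear_combination hb0 + q * hb'
        · linear_combination hy + hc + (m - q) * hb' - b' * hm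
        · linear_combination hc
      · rw [AddSubgroup.closure_le]
        rintro v hv
        rcases hv with rfl | rfl
        · show f _ = 0
          rw [hfapp, Prod.mk_eq_zero, Prod.mk_eq_zero]
          exact ⟨by ring, aux_cast_zero ⟨0, by ring⟩, aux_cast_zero ⟨1, by ring⟩⟩
        · show f _ = 0
          rw [hfapp, Prod.mk_eq_zero, Prod.mk_eq_zero]
          exact ⟨by linear_combination -q * hm, aux_cast_zero ⟨q, by ring⟩,
            aux_cast_zero ⟨q, by ring⟩⟩
    exact ⟨(QuotientAddGroup.quotientAddEquivOfEq hker.symm).trans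
      (QuotientAddGroup.quotientKerEquivOfSurjective f hsurj)⟩
  · -- Odd case
    rintro ⟨k, hk⟩
    have hp2 : IsCoprime p 2 := ⟨1, -k, by linarith⟩
    have hp2q : IsCoprime p (2 * q) := hp2.mul_right hpq
    obtain ⟨s, t, hst⟩ : IsCoprime (p - 2*q) (2*q) := by
      have := hp2q.add_mul_left_left (-1)
      simpa [mul_neg_one, ← sub_eq_add_neg] using this
    have hco' : IsCoprime (p - 2*q) (2*q) := ⟨s, t, hst⟩
    have h2q : (2*q : ℤ) ≠ 0 := by simpa using hq
    set f : (ℤ × ℤ × ℤ) →+ ℤ × ZMod 2 := AddMonoidHom.mk'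
      (fun v => ((p - 2*q) * v.1 + 2*q * (v.2.2 - v.2.1), (v.2.2 : ZMod 2)))
      (by
        rintro ⟨x1, y1, z1⟩ ⟨x2, y2, z2⟩
        refine Prod.ext ?_ ?_ <;> simp <;> push_cast <;> ring) with hf
    have hfapp : ∀ x y z : ℤ,
        f (x, y, z) = ((p - 2*q) * x + 2*q * (z - y), (z : ZMod 2)) := by
      intro x y z; rfl
    have hsurj : Function.Surjective f := by
      rintro ⟨n, c⟩
      obtain ⟨b, hb⟩ := ZMod.intCast_surjective c
      set N := n - 2*q*b with hN
      refine ⟨(s*N, -(t*N), b), ?_⟩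
      rw [hfapp]
      refine Prod.ext ?_ ?_
      · show (p - 2*q) * (s*N) + 2*q * (b - (-(t*N))) = n
        linear_combination N * hst
      · exact hb
    have hker : f.ker = AddSubgroup.closure {((0:ℤ),(2:ℤ),(2:ℤ)), (2*q, p, 2*q)} := by
      apply le_antisymm
      · rintro ⟨x, y, z⟩ hv
        have hv' : f (x, y, z) = 0 := hv
        rw [hfapp, Prod.mk_eq_zero] at hv'
        obtain ⟨h1, h3⟩ := hv'
        obtain ⟨c, hc⟩ : (2:ℤ) ∣ z := by
          exact_mod_cast (ZMod.intCast_zmod_eq_zero_iff_dvd z 2).mp h3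
        obtain ⟨b, hb0⟩ : (2*q) ∣ x := by
          refine (IsCoprime.symm hco').dvd_of_dvd_mul_left ⟨y - z, ?_⟩
          linear_combination h1
        have hy : y = z + (p - 2*q) * b := by
          have h0 : (2*q) * ((p - 2*q) * b - (y - z)) = 0 := by
            linear_combination h1 - (p - 2*q) * hb0
          have := (mul_eq_zero.mp h0).resolve_left h2q
          linarith
        refine aux_mem_closure (c - q * b) b ?_
        rw [aux_smul_eq, Prod.mk.injEq, Prod.mk.injEq]
        refine ⟨?_, ?_, ?_⟩
        · linear_combination hb0
        · linear_combination hy + hc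
        · linear_combination hc
      · rw [AddSubgroup.closure_le]
        rintro v hv
        rcases hv with rfl | rfl
        · show f _ = 0
          rw [hfapp, Prod.mk_eq_zero]
          exact ⟨by ring, aux_cast_zero ⟨1, by ring⟩⟩
        · show f _ = 0
          rw [hfapp, Prod.mk_eq_zero]
          exact ⟨by ring, aux_cast_zero ⟨q, by ring⟩⟩
    exact ⟨(QuotientAddGroup.quotientAddEquivOfEq hker.symm).trans
      (QuotientAddGroup.quotientKerEquivOfSurjective f hsurj)⟩
end
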